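/- Let L be a first-order language whose theory under consideration has Skolem functions (every substructure of a model is an elementary substructure). Let δ be an ordinal and (N_α : α ≤ δ) an increasing continuous elementary chain of L-structures with N_δ = ⋃_{α<δ} N_α, such that for each α < δ, N_{α+1} is the substructure generated by N_α ∪ {a_α} for some element a_α. Suppose there is a map assigning to each L-formula φ(x, ȳ) an L-formula ψ_φ(ȳ) without parameters such that for every α < δ and every finite tuple b̄ from N_α, N_{α+1} ⊨ φ(a_α, b̄) iff N_α ⊨ ψ_φ(b̄). Then for every subset X of N_δ definable in N_δ by a formula with parameters from N_δ, and every α < δ, the set X ∩ N_α is definable in N_α by a formula with parameters from N_α. -/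

import Mathlib

open FirstOrder

variable {L : FirstOrder.Language} {M : Type*} [L.Structure M]

/-- `S` is the carrier of an elementary substructure of the ambient structure `M`. -/
def IsElementaryCarrier (S : Set M) : Prop :=
  ∃ E : L.ElementarySubstructure M, (E : Set M) = S

/-!
Induct along the chain on the level `β` of the parameters. At a limit level the finitely many
parameters already live at some earlier level. At a successor level `β = γ + 1` every parameter
is the value of a term in `a_γ` and finitely many elements `d` of `N_γ`, so `χ(x, c)` becomes a
formula `φ(a_γ, x, d)`; for `x ∈ N_γ` the uniform definition of the type of `a_γ` over `N_γ`
replaces it by `ψ_φ(x, d)`, whose parameters lie one level lower.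
-/

open Set FirstOrder.Language Substructure

namespace FirstOrder.Language

theorem Substructure.exists_finite_subset_mem_closure {s : Set M} {x : M}
    (hx : x ∈ closure L s) : ∃ F ⊆ s, F.Finite ∧ x ∈ closure L F := by
  refine Substructure.closure_induction hx
    (fun y hy => ⟨{y}, singleton_subset_iff.2 hy, finite_singleton y, subset_closure rfl⟩) ?_
  intro n f xs hxs
  choose F hFs hFfin hxF using hxs
  exact ⟨⋃ i, F i, iUnion_subset hFs, finite_iUnion hFfin,
    (closure L _).fun_mem f xs fun i => closure_mono (subset_iUnion F i) (hxF i)⟩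

theorem Substructure.exists_term_realize_eq_of_mem_closure_range {α : Type*} {v : α → M}
    {x : M} (hx : x ∈ closure L (range v)) : ∃ t : L.Term α, t.realize v = x := by
  obtain ⟨t, rfl⟩ := mem_closure_iff_exists_term.1 hx
  refine ⟨t.relabel (rangeSplitting v), ?_⟩
  rw [Term.realize_relabel]
  exact congrArg t.realize (funext (apply_rangeSplitting v))

theorem Substructure.exists_terms_of_mem_closure_union_singleton {S : Set M} {p : M} {m : ℕ}
    {c : Fin m → M} (hc : ∀ j, c j ∈ closure L (S ∪ {p})) :
    ∃ (n : ℕ) (d : Fin n → M), (∀ k, d k ∈ S) ∧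
      ∃ t : Fin m → L.Term (Fin 1 ⊕ Fin n),
        ∀ j, (t j).realize (Sum.elim (fun _ => p) d) = c j := by
  choose F hFS hFfin hcF using fun j => exists_finite_subset_mem_closure (hc j)
  obtain ⟨n, d, -, hd⟩ := ((finite_iUnion hFfin).sdiff (t := {p})).fin_param
  have hdS : ∀ k, d k ∈ S := by
    intro k
    obtain ⟨hkF, hkp⟩ : d k ∈ (⋃ j, F j) \ {p} := hd ▸ mem_range_self k
    obtain ⟨j, hj⟩ := mem_iUnion.1 hkF
    exact (hFS j hj).resolve_right hkp
  have hFd : ∀ j, F j ⊆ range (Sum.elim (fun _ : Fin 1 => p) d) := by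
    intro j y hy
    rw [Sum.elim_range, range_const, hd]
    by_cases hyp : y = p
    · exact Or.inl hyp
    · exact Or.inr ⟨mem_iUnion.2 ⟨j, hy⟩, hyp⟩
  choose t ht using fun j =>
    exists_term_realize_eq_of_mem_closure_range (closure_mono (hFd j) (hcF j))
  exact ⟨n, d, hdS, t, ht⟩

variable (L) in
/-- `X ∩ S` is definable with parameters from `S`, truth being evaluated in the ambient `M`. -/
def TraceDefinable (S X : Set M) : Prop :=
  ∃ (m : ℕ) (χ : L.Formula (Fin 1 ⊕ Fin m)) (c : Fin m → M), (∀ j, c j ∈ S) ∧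
    ∀ x ∈ S, x ∈ X ↔ χ.Realize (Sum.elim (fun _ => x) c)

variable (L) in
def TracesDefinable (S T : Set M) : Prop :=
  ∀ (m : ℕ) (χ : L.Formula (Fin 1 ⊕ Fin m)) (c : Fin m → M), (∀ j, c j ∈ T) →
    TraceDefinable L S {x | χ.Realize (Sum.elim (fun _ => x) c)}

namespace TracesDefinable

variable {S T U : Set M}

theorem refl (S : Set M) : TracesDefinable L S S :=
  fun _ χ c hc => ⟨_, χ, c, hc, fun _ _ => Iff.rfl⟩

theorem trans (hST : TracesDefinable L S T) (hTU : TracesDefinable L T U) (hsub : S ⊆ T) :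
    TracesDefinable L S U := by
  intro m χ c hc
  obtain ⟨m', χ', c', hc', hχ'⟩ := hTU m χ c hc
  obtain ⟨m'', χ'', c'', hc'', hχ''⟩ := hST m' χ' c' hc'
  exact ⟨m'', χ'', c'', hc'', fun x hx => (hχ' x (hsub hx)).trans (hχ'' x hx)⟩

theorem closure_union_singleton {p : M}
    {Ψ : ∀ n : ℕ, L.Formula (Fin 1 ⊕ Fin n) → L.Formula (Fin n)}
    (hΨ : ∀ (n : ℕ) (φ : L.Formula (Fin 1 ⊕ Fin n)) (b : Fin n → M),
      (∀ k, b k ∈ S) → (φ.Realize (Sum.elim (fun _ => p) b) ↔ (Ψ n φ).Realize b)) :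
    TracesDefinable L S (closure L (S ∪ {p})) := by
  intro m χ c hc
  obtain ⟨n, d, hdS, t, ht⟩ := Substructure.exists_terms_of_mem_closure_union_singleton hc
  -- `φ(p, x, d) = χ(x, c)`: the variable `Sum.inr 0` stands for `x`, the others for `d`.
  let φ : L.Formula (Fin 1 ⊕ Fin (n + 1)) :=
    χ.subst (Sum.elim (fun _ => Term.var (Sum.inr 0))
      fun j => (t j).relabel (Sum.map id Fin.succ))
  refine ⟨n, (Ψ (n + 1) φ).relabel (Fin.cases (Sum.inl 0) Sum.inr), d, hdS, fun x hx => ?_⟩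
  have hxd : ∀ k, (Fin.cons x d : Fin (n + 1) → M) k ∈ S := Fin.cases hx hdS
  have hφ : φ.Realize (Sum.elim (fun _ => p) (Fin.cons x d)) ↔
      χ.Realize (Sum.elim (fun _ => x) c) := by
    have hv : Sum.elim (fun _ : Fin 1 => p) (Fin.cons x d : Fin (n + 1) → M) ∘
        Sum.map id Fin.succ = Sum.elim (fun _ => p) d := by
      ext (_ | _) <;> rfl
    simp only [φ, Formula.Realize, BoundedFormula.realize_subst]
    refine iff_of_eq (congrArg₂ _ (funext fun v => ?_) rfl)
    rcases v with _ | j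
    · rfl
    · simp only [Sum.elim_inr, Term.realize_relabel, hv, ht]
  have hcases : Sum.elim (fun _ : Fin 1 => x) d ∘ Fin.cases (Sum.inl 0) Sum.inr =
      (Fin.cons x d : Fin (n + 1) → M) := by
    ext k
    exact Fin.cases rfl (fun _ => rfl) k
  rw [Set.mem_ofPred_eq, ← hφ, hΨ (n + 1) φ _ hxd, Formula.realize_relabel, hcases]

/-- Finitely many parameters from the union of a chain below `β` already lie in one member. -/
theorem biUnion_Iio {ι : Type*} [LinearOrder ι] {A : ι → Set M} {i β : ι} (hiβ : i < β)
    (hmono : ∀ γ γ', γ ≤ γ' → γ' < β → A γ ⊆ A γ')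
    (h : ∀ γ, i ≤ γ → γ < β → TracesDefinable L S (A γ)) :
    TracesDefinable L S (⋃ γ ∈ Iio β, A γ) := by
  classical
  intro m χ c hc
  simp only [mem_iUnion, mem_Iio, exists_prop] at hc
  choose g hgβ hg using hc
  let levels := insert i (Finset.univ.image g)
  have hlevels : ∀ γ ∈ levels, γ < β := by
    simpa [levels, hiβ] using hgβ
  have hγβ := hlevels _ (levels.max'_mem (Finset.insert_nonempty _ _))
  refine h _ (levels.le_max' i (Finset.mem_insert_self _ _)) hγβ m χ c fun j => ?_
  exact hmono (g j) _ (levels.le_max' _ (by simp [levels])) hγβ (hg j)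

end TracesDefinable

end FirstOrder.Language

theorem tracesDefinable_of_chain {δ : Ordinal} {A : Ordinal → Set M} {a : Ordinal → M}
    (hmono : ∀ i j : Ordinal, i ≤ j → j ≤ δ → A i ⊆ A j)
    (hcont : ∀ j : Ordinal, j ≤ δ → Order.IsSuccLimit j → A j = ⋃ i ∈ Set.Iio j, A i)
    (hsucc : ∀ i < δ, (Substructure.closure L (A i ∪ {a i}) : Set M) = A (i + 1))
    {Ψ : ∀ n : ℕ, L.Formula (Fin 1 ⊕ Fin n) → L.Formula (Fin n)}
    (hΨ : ∀ i < δ, ∀ (n : ℕ) (φ : L.Formula (Fin 1 ⊕ Fin n)) (b : Fin n → M),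
      (∀ j, b j ∈ A i) → (φ.Realize (Sum.elim (fun _ => a i) b) ↔ (Ψ n φ).Realize b))
    {i : Ordinal} (β : Ordinal) (hiβ : i ≤ β) (hβδ : β ≤ δ) :
    TracesDefinable L (A i) (A β) := by
  induction β using WellFoundedLT.induction with
  | _ β IH =>
  rcases hiβ.eq_or_lt with rfl | hiβ
  · exact .refl _
  rcases Ordinal.zero_or_succ_or_isSuccLimit β with rfl | ⟨γ, rfl⟩ | hlim
  · exact absurd hiβ (not_lt_zero (a := i))
  · have hγδ : γ < δ := (Order.lt_succ γ).trans_le hβδ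
    have hiγ : i ≤ γ := Order.lt_succ_iff.1 hiβ
    have hstep := TracesDefinable.closure_union_singleton (hΨ γ hγδ)
    rw [hsucc γ hγδ, ← Order.succ_eq_add_one] at hstep
    exact (IH γ (Order.lt_succ γ) hiγ hγδ.le).trans hstep (hmono i γ hiγ hγδ.le)
  · rw [hcont β hβδ hlim]
    exact TracesDefinable.biUnion_Iio hiβ (fun γ γ' h h' => hmono γ γ' h (h'.le.trans hβδ))
      fun γ hiγ hγβ => IH γ hγβ hiγ (hγβ.le.trans hβδ)

theorem inter_definable_of_definable_chain_general
    (δ : Ordinal) (A : Ordinal → Set M) (a : Ordinal → M)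
    (hmono : ∀ i j : Ordinal, i ≤ j → j ≤ δ → A i ⊆ A j)
    (hcont : ∀ j : Ordinal, j ≤ δ → Order.IsSuccLimit j → A j = ⋃ i ∈ Set.Iio j, A i)
    (htop : A δ = Set.univ)
    (hsucc : ∀ i < δ,
      (FirstOrder.Language.Substructure.closure L (A i ∪ {a i}) : Set M) = A (i + 1))
    (Ψ : ∀ n : ℕ, L.Formula (Fin 1 ⊕ Fin n) → L.Formula (Fin n))
    (hΨ : ∀ i < δ, ∀ (n : ℕ) (φ : L.Formula (Fin 1 ⊕ Fin n)) (b : Fin n → M),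
      (∀ j, b j ∈ A i) →
      (φ.Realize (Sum.elim (fun _ => a i) b) ↔ (Ψ n φ).Realize b)) :
    ∀ (m : ℕ) (χ : L.Formula (Fin 1 ⊕ Fin m)) (c : Fin m → M), ∀ i < δ,
      ∃ (m' : ℕ) (χ' : L.Formula (Fin 1 ⊕ Fin m')) (c' : Fin m' → M),
        (∀ j, c' j ∈ A i) ∧
        ∀ x ∈ A i,
          (χ.Realize (Sum.elim (fun _ => x) c) ↔
            χ'.Realize (Sum.elim (fun _ => x) c')) := by
  intro m χ c i hi
  exact tracesDefinable_of_chain hmono hcont hsucc hΨ δ hi.le le_rfl m χ c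
    fun j => htop ▸ Set.mem_univ (c j)

/-- Let `(N_α : α ≤ δ)` be an increasing continuous elementary chain (of carriers `A α`
inside the ambient structure `M = N_δ`) for a theory with Skolem functions, where each
`N_{α+1}` is generated by `N_α ∪ {a_α}` and `N_δ = ⋃_{α<δ} N_α`.  Suppose the type of each
`a_α` over `N_α` is uniformly definable without parameters: there is `φ ↦ ψ_φ` such that for
all `α < δ` and all tuples `b̄` from `N_α`, `φ(a_α, b̄)` holds iff `ψ_φ(b̄)` holds.  Then for
every subset `X` of `N_δ` definable with parameters and every `α < δ`, the set `X ∩ N_α` is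
definable in `N_α` by a formula with parameters from `N_α`. -/
theorem inter_definable_of_definable_chain
    (hSkolem : ∀ S : L.Substructure M, S.IsElementary)
    (δ : Ordinal) (A : Ordinal → Set M) (a : Ordinal → M)
    (hmono : ∀ i j : Ordinal, i ≤ j → j ≤ δ → A i ⊆ A j)
    (hcont : ∀ j : Ordinal, j ≤ δ → Order.IsSuccLimit j → A j = ⋃ i ∈ Set.Iio j, A i)
    (htop : A δ = Set.univ)
    (hδ : A δ = ⋃ i ∈ Set.Iio δ, A i)
    (helem : ∀ i ≤ δ, IsElementaryCarrier (L := L) (A i))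
    (hsucc : ∀ i < δ,
      (FirstOrder.Language.Substructure.closure L (A i ∪ {a i}) : Set M) = A (i + 1))
    (Ψ : ∀ n : ℕ, L.Formula (Fin 1 ⊕ Fin n) → L.Formula (Fin n))
    (hΨ : ∀ i < δ, ∀ (n : ℕ) (φ : L.Formula (Fin 1 ⊕ Fin n)) (b : Fin n → M),
      (∀ j, b j ∈ A i) →
      (φ.Realize (Sum.elim (fun _ => a i) b) ↔ (Ψ n φ).Realize b)) :
    ∀ (m : ℕ) (χ : L.Formula (Fin 1 ⊕ Fin m)) (c : Fin m → M), ∀ i < δ,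
      ∃ (m' : ℕ) (χ' : L.Formula (Fin 1 ⊕ Fin m')) (c' : Fin m' → M),
        (∀ j, c' j ∈ A i) ∧
        ∀ x ∈ A i,
          (χ.Realize (Sum.elim (fun _ => x) c) ↔
            χ'.Realize (Sum.elim (fun _ => x) c')) :=
  inter_definable_of_definable_chain_general δ A a hmono hcont htop hsucc Ψ hΨ
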